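/- Let (A, τ) be a noncommutative probability space, let {A_i ; i ∈ I} be a free family of unital subalgebras, and let a₁, …, a_n ∈ A with each a_j belonging to A_{i_j}. Then τ(a₁⋯a_n) = Σ_π Π_{V ∈ π} R^{(|V|)}(a_{j₁}, …, a_{j_k}), where the sum runs only over those noncrossing partitions π ∈ NC(n) all of whose blocks are monochromatic, i.e. such that j ↦ i_j is constant on every block of π, and (R⁽ⁿ⁾) are the noncrossing cumulant functionals of (A, τ). -/

import Mathlib

open scoped Classical

/-- `π` is a partition of `{1, …, n}` (modelled as `Fin n`): the blocks are nonempty and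
every point belongs to exactly one block. -/
def IsPartition {n : ℕ} (π : Finset (Finset (Fin n))) : Prop :=
  (∀ B ∈ π, B.Nonempty) ∧ ∀ i : Fin n, ∃! B : Finset (Fin n), B ∈ π ∧ i ∈ B

/-- A partition of `{1, …, n}` is noncrossing if there is no quadruple `i < j < k < l`
with `i, k` in one block and `j, l` in a different block. -/
def IsNoncrossing {n : ℕ} (π : Finset (Finset (Fin n))) : Prop :=
  ¬ ∃ i j k l : Fin n, i < j ∧ j < k ∧ k < l ∧
      ∃ B ∈ π, ∃ B' ∈ π, B ≠ B' ∧ i ∈ B ∧ k ∈ B ∧ j ∈ B' ∧ l ∈ B'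

/-- `NC n`: the (finite) set of noncrossing partitions of `{1, …, n}`. -/
noncomputable def NC (n : ℕ) : Finset (Finset (Finset (Fin n))) :=
  Finset.univ.filter fun π => IsPartition π ∧ IsNoncrossing π

/-- The term `Π_{V ∈ π} R^{(|V|)}(a_{j₁}, …, a_{j_k})` associated to a partition `π`,
where each block `V = {j₁ < … < j_k}` is listed in increasing order. -/
noncomputable def cumulantTerm {A : Type*} [Ring A] [Algebra ℂ A]
    (R : ∀ m : ℕ, MultilinearMap ℂ (fun _ : Fin m => A) ℂ)
    {n : ℕ} (π : Finset (Finset (Fin n))) (a : Fin n → A) : ℂ :=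
  ∏ B ∈ π, R B.card fun i => a (B.orderIsoOfFin rfl i).1

/-- The moment–cumulant relation: for every `n ≥ 1` and `a₁, …, a_n ∈ A`,
`τ(a₁ ⋯ a_n) = Σ_{π ∈ NC(n)} Π_{V ∈ π} R^{(|V|)}(a_V)`. -/
def MomentCumulant {A : Type*} [Ring A] [Algebra ℂ A] (τ : A →ₗ[ℂ] ℂ)
    (R : ∀ m : ℕ, MultilinearMap ℂ (fun _ : Fin m => A) ℂ) : Prop :=
  ∀ n : ℕ, 0 < n → ∀ a : Fin n → A,
    τ (List.ofFn a).prod = ∑ π ∈ NC n, cumulantTerm R π a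


/-- A family `{A_i ; i ∈ I}` of unital subalgebras of `A` is *free* with respect to the
linear functional `τ` if whenever `a₁, …, a_k` are centered (`τ (a j) = 0`) and each
`a_j` lies in some `A_{i_j}` with consecutive indices distinct, then `τ (a₁ ⋯ a_k) = 0`. -/
def IsFreeFamily {A : Type*} [Ring A] [Algebra ℂ A] {ι : Type*}
    (τ : A →ₗ[ℂ] ℂ) (Alg : ι → Subalgebra ℂ A) : Prop :=
  ∀ (k : ℕ) (idx : Fin (k + 1) → ι) (a : Fin (k + 1) → A),
    (∀ j, a j ∈ Alg (idx j)) →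
    (∀ j : Fin k, idx j.castSucc ≠ idx j.succ) →
    (∀ j, τ (a j) = 0) →
    τ (List.ofFn a).prod = 0

/-!
Induction on `n`. If all letters lie in one subalgebra, the claim is the moment–cumulant formula.
Otherwise cut the word into its maximal runs `b₁ ⋯ b_p` of letters from a common subalgebra.
Consecutive runs lie in different subalgebras, so freeness applied to the centred runs
`b_t - τ(b_t)`, expanded multilinearly, gives
`∑_{S ⊆ {1, …, p}} ∏_{t ∉ S} (-τ(b_t)) · τ(∏_{t ∈ S} b_t) = 0`.
For `S ≠ {1, …, p}` every factor is a moment of a shorter word, so by induction the term is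
`(-1)^{p - |S|}` times the sum of the cumulant terms of the monochromatic noncrossing partitions
`π` with `T(π) ⊆ S`, where `T(π)` is the set of runs met by blocks of `π` that meet several
runs: since runs are intervals, gluing a partition of the runs in `S` to partitions of the
single runs outside `S` creates no crossing. `T(π)` is never all runs (a block with two
elements in different runs at minimal distance encloses a letter of another colour, whose run
no block meeting several runs can reach without crossing), so `∑_{S ⊇ T(π)} (-1)^{p - |S|} = 0`,
and comparing the terms `S = {1, …, p}` gives the formula.
-/

open Finset

lemma Nat.count_eq_count_iff {p : ℕ → Prop} [DecidablePred p] {j k : ℕ} (hjk : j ≤ k) :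
    Nat.count p j = Nat.count p k ↔ ∀ l, j ≤ l → l < k → ¬ p l := by
  refine ⟨fun h l hjl hlk hl => ?_, fun h => le_antisymm (Nat.count_monotone p hjk) ?_⟩
  · have := Nat.count_strict_mono hl hlk
    have := Nat.count_monotone p hjl
    omega
  · refine not_lt.1 fun hlt => ?_
    obtain ⟨l, ⟨hjl, hlk⟩, hl⟩ := Nat.exists_of_count_lt_count hlt
    exact h l hjl hlk hl

lemma Nat.exists_le_count_eq {p : ℕ → Prop} [DecidablePred p] {n v : ℕ} (hv : v ≤ Nat.count p n) :
    ∃ j ≤ n, Nat.count p j = v := by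
  have hex : ∃ j, v ≤ Nat.count p j := ⟨n, hv⟩
  refine ⟨Nat.find hex, Nat.find_min' hex hv, le_antisymm ?_ (Nat.find_spec hex)⟩
  rcases Nat.eq_zero_or_eq_succ_pred (Nat.find hex) with h0 | hsucc
  · simp [h0]
  · have hlt := Nat.find_min hex (Nat.pred_lt_self (by omega))
    rw [hsucc, Nat.count_succ]
    split_ifs <;> omega

lemma forall_eq_iff_forall_eq_succ {ι : Type*} (g : ℕ → ι) {j k : ℕ} :
    (∀ w, j ≤ w → w ≤ k → g w = g j) ↔ ∀ l, j ≤ l → l < k → g l = g (l + 1) := by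
  refine ⟨fun h l hjl hlk => (h l hjl hlk.le).trans (h (l + 1) (by omega) hlk).symm,
    fun h w hjw hwk => ?_⟩
  induction w, hjw using Nat.le_induction with
  | base => rfl
  | succ w hjw ih => exact (h w hjw (by omega)).symm.trans (ih (by omega))

section Runs

variable {ι : Type*} {m p : ℕ}

structure IsRunDecomposition (idx : Fin m → ι) (f : Fin m → Fin p) : Prop where
  monotone : Monotone f
  surjective : Function.Surjective f
  idx_eq {j k : Fin m} : f j = f k → idx j = idx k
  eq_of_forall {j k : Fin m} : j ≤ k → (∀ w, j ≤ w → w ≤ k → idx w = idx j) → f j = f k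

namespace IsRunDecomposition

variable {idx : Fin m → ι}

lemma eq_of_le_of_le {f : Fin m → Fin p} (hf : IsRunDecomposition idx f) {j w k : Fin m}
    (hjw : j ≤ w) (hwk : w ≤ k) (h : f j = f k) : f w = f j :=
  le_antisymm (h ▸ hf.monotone hwk) (hf.monotone hjw)

noncomputable def colour {f : Fin m → Fin p} (hf : IsRunDecomposition idx f) (t : Fin p) : ι :=
  idx (Function.surjInv hf.surjective t)

lemma idx_eq_colour {f : Fin m → Fin p} (hf : IsRunDecomposition idx f) (j : Fin m) :
    idx j = hf.colour (f j) :=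
  hf.idx_eq (Function.surjInv_eq hf.surjective (f j)).symm

lemma colour_castSucc_ne_succ {k : ℕ} {f : Fin m → Fin (k + 1)} (hf : IsRunDecomposition idx f)
    (t : Fin k) : hf.colour t.castSucc ≠ hf.colour t.succ := by
  intro h
  obtain ⟨x, hx⟩ := hf.surjective t.castSucc
  obtain ⟨y, hy⟩ := hf.surjective t.succ
  have hlt : f x < f y := hx ▸ hy ▸ Fin.castSucc_lt_succ
  refine hlt.ne (hf.eq_of_forall (hf.monotone.reflect_lt hlt).le fun w hxw hwy => ?_)
  have h1 := hf.monotone hxw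
  have h2 := hy ▸ hf.monotone hwy
  have : f w = f x ∨ f w = t.succ := by
    simp only [Fin.ext_iff, Fin.le_iff_val_le_val, Fin.val_succ, Fin.val_castSucc] at h1 h2 hx ⊢
    omega
  rw [hf.idx_eq_colour, hf.idx_eq_colour]
  rcases this with h3 | h3 <;> rw [h3, hx, h]

end IsRunDecomposition

lemma exists_isRunDecomposition (idx : Fin m → ι) (hm : 0 < m) :
    ∃ k, ∃ f : Fin m → Fin (k + 1), IsRunDecomposition idx f := by
  set g : ℕ → ι := fun l => idx ⟨min l (m - 1), by omega⟩
  have hg (j : Fin m) : g j = idx j := congrArg idx (Fin.ext (by simp; omega))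
  set c : ℕ → Prop := fun l => g l ≠ g (l + 1)
  have hrun {j k : Fin m} (hjk : j ≤ k) :
      Nat.count c j = Nat.count c k ↔ ∀ w, j ≤ w → w ≤ k → idx w = idx j := by
    simp only [Nat.count_eq_count_iff hjk, c, not_not, ← forall_eq_iff_forall_eq_succ]
    refine ⟨fun h w hjw hwk => by simpa only [hg] using h w hjw hwk, fun h w hjw hwk => ?_⟩
    simpa only [← hg] using h ⟨w, by omega⟩ hjw hwk
  refine ⟨Nat.count c (m - 1),
    fun j => ⟨Nat.count c j, Nat.lt_succ_of_le (Nat.count_monotone c (by omega))⟩,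
    fun j k hjk => Nat.count_monotone c hjk, fun t => ?_, fun {j k} h => ?_,
    fun {j k} hjk h => Fin.ext ((hrun hjk).2 h)⟩
  · obtain ⟨j, hj, hjt⟩ := Nat.exists_le_count_eq (Nat.lt_succ_iff.1 t.2)
    exact ⟨⟨j, by omega⟩, Fin.ext hjt⟩
  · rcases le_total j k with hle | hle
    · exact ((hrun hle).1 (congrArg Fin.val h) k hle le_rfl).symm
    · exact (hrun hle).1 (congrArg Fin.val h).symm j hle le_rfl

end Runs

section Partitions

variable {m : ℕ}

def IsPartitionOn (U : Finset (Fin m)) (π : Finset (Finset (Fin m))) : Prop :=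
  (∀ B ∈ π, B.Nonempty ∧ B ⊆ U) ∧ ∀ i ∈ U, ∃! B, B ∈ π ∧ i ∈ B

noncomputable def NCOn (U : Finset (Fin m)) (P : Finset (Fin m) → Prop) :
    Finset (Finset (Finset (Fin m))) :=
  {π | IsPartitionOn U π ∧ IsNoncrossing π ∧ ∀ B ∈ π, P B}

variable {U V W : Finset (Fin m)} {P Q : Finset (Fin m) → Prop}
  {π σ ρ : Finset (Finset (Fin m))}

@[simp]
lemma mem_NCOn : π ∈ NCOn U P ↔ IsPartitionOn U π ∧ IsNoncrossing π ∧ ∀ B ∈ π, P B := by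
  simp [NCOn]

lemma IsPartitionOn.eq_of_mem (hπ : IsPartitionOn U π) {B B' : Finset (Fin m)} (hB : B ∈ π)
    (hB' : B' ∈ π) {i : Fin m} (hi : i ∈ B) (hi' : i ∈ B') : B = B' :=
  (hπ.2 i ((hπ.1 B hB).2 hi)).unique ⟨hB, hi⟩ ⟨hB', hi'⟩

lemma IsNoncrossing.mono (h : IsNoncrossing π) (hσ : σ ⊆ π) : IsNoncrossing σ :=
  fun ⟨i, j, k, l, hij, hjk, hkl, B, hB, B', hB', hne, hx⟩ =>
    h ⟨i, j, k, l, hij, hjk, hkl, B, hσ hB, B', hσ hB', hne, hx⟩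

lemma NC_filter_eq_NCOn (P : Finset (Fin m) → Prop)
    [DecidablePred fun π : Finset (Finset (Fin m)) => ∀ B ∈ π, P B] :
    (NC m).filter (fun π => ∀ B ∈ π, P B) = NCOn univ P := by
  ext π
  simp only [NC, IsPartition, mem_filter, mem_univ, true_and, mem_NCOn, IsPartitionOn,
    subset_univ, and_true, forall_const, and_assoc]

lemma NCOn_empty (P : Finset (Fin m) → Prop) : NCOn ∅ P = {∅} := by
  ext π
  simp only [mem_NCOn, IsPartitionOn, subset_empty, notMem_empty, IsEmpty.forall_iff,
    implies_true, and_true, mem_singleton]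
  constructor
  · rintro ⟨hπ, -, -⟩
    exact eq_empty_of_forall_notMem fun B hB => (hπ B hB).1.ne_empty (hπ B hB).2
  · rintro rfl
    simp [IsNoncrossing]

lemma NCOn_congr (h : ∀ B ⊆ U, B.Nonempty → (P B ↔ Q B)) : NCOn U P = NCOn U Q := by
  ext π
  simp only [mem_NCOn]
  refine ⟨fun ⟨hπ, hnc, hP⟩ => ⟨hπ, hnc, fun B hB => ?_⟩,
    fun ⟨hπ, hnc, hQ⟩ => ⟨hπ, hnc, fun B hB => ?_⟩⟩
  · exact (h B (hπ.1 B hB).2 (hπ.1 B hB).1).1 (hP B hB)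
  · exact (h B (hπ.1 B hB).2 (hπ.1 B hB).1).2 (hQ B hB)

lemma NCOn_and [DecidablePred fun π : Finset (Finset (Fin m)) => ∀ B ∈ π, Q B] :
    NCOn U (fun B => P B ∧ Q B) = (NCOn U P).filter fun π => ∀ B ∈ π, Q B := by
  ext π
  simp only [mem_filter, mem_NCOn, forall_and, and_assoc]

lemma IsPartitionOn.union (hσ : IsPartitionOn V σ) (hρ : IsPartitionOn W ρ)
    (hVW : Disjoint V W) : IsPartitionOn (V ∪ W) (σ ∪ ρ) := by
  refine ⟨fun B hB => ?_, fun i hi => ?_⟩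
  · rcases mem_union.1 hB with hB | hB
    · exact ⟨(hσ.1 B hB).1, (hσ.1 B hB).2.trans subset_union_left⟩
    · exact ⟨(hρ.1 B hB).1, (hρ.1 B hB).2.trans subset_union_right⟩
  have hmem {B} (hB : B ∈ σ ∪ ρ) (hiB : i ∈ B) : (B ∈ σ ∧ i ∈ V) ∨ (B ∈ ρ ∧ i ∈ W) :=
    (mem_union.1 hB).imp (fun h => ⟨h, (hσ.1 B h).2 hiB⟩) (fun h => ⟨h, (hρ.1 B h).2 hiB⟩)
  rcases mem_union.1 hi with hiV | hiW
  · obtain ⟨B, ⟨hB, hiB⟩, huniq⟩ := hσ.2 i hiV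
    refine ⟨B, ⟨mem_union_left _ hB, hiB⟩, fun B' ⟨hB', hiB'⟩ => ?_⟩
    rcases hmem hB' hiB' with h | h
    · exact huniq B' ⟨h.1, hiB'⟩
    · exact absurd h.2 (disjoint_left.1 hVW hiV)
  · obtain ⟨B, ⟨hB, hiB⟩, huniq⟩ := hρ.2 i hiW
    refine ⟨B, ⟨mem_union_right _ hB, hiB⟩, fun B' ⟨hB', hiB'⟩ => ?_⟩
    rcases hmem hB' hiB' with h | h
    · exact absurd hiW (disjoint_left.1 hVW h.2)
    · exact huniq B' ⟨h.1, hiB'⟩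

lemma IsPartitionOn.filter_subset (hπ : IsPartitionOn U π) (hV : V ⊆ U)
    (h : ∀ B ∈ π, ∀ i ∈ B, i ∈ V → B ⊆ V) : IsPartitionOn V (π.filter (· ⊆ V)) := by
  refine ⟨fun B hB => ⟨(hπ.1 B (mem_filter.1 hB).1).1, (mem_filter.1 hB).2⟩, fun i hi => ?_⟩
  obtain ⟨B, ⟨hB, hiB⟩, huniq⟩ := hπ.2 i (hV hi)
  exact ⟨B, ⟨mem_filter.2 ⟨hB, h B hB i hiB hi⟩, hiB⟩,
    fun B' ⟨hB', hiB'⟩ => huniq B' ⟨(mem_filter.1 hB').1, hiB'⟩⟩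

lemma IsNoncrossing.union (hσ : IsNoncrossing σ) (hρ : IsNoncrossing ρ) (hσV : ∀ B ∈ σ, B ⊆ V)
    (hρV : ∀ B ∈ ρ, ∀ x ∈ B, ∀ y ∈ B, ∀ z ∈ V, ¬ (x < z ∧ z < y)) :
    IsNoncrossing (σ ∪ ρ) := by
  rintro ⟨i, j, k, l, hij, hjk, hkl, B, hB, B', hB', hne, hi, hk, hj, hl⟩
  rcases mem_union.1 hB with hB | hB <;> rcases mem_union.1 hB' with hB' | hB'
  · exact hσ ⟨i, j, k, l, hij, hjk, hkl, B, hB, B', hB', hne, hi, hk, hj, hl⟩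
  · exact hρV B' hB' j hj l hl k (hσV B hB hk) ⟨hjk, hkl⟩
  · exact hρV B hB i hi k hk j (hσV B' hB' hj) ⟨hij, hjk⟩
  · exact hρ ⟨i, j, k, l, hij, hjk, hkl, B, hB, B', hB', hne, hi, hk, hj, hl⟩

lemma sum_NCOn_mul_sum_NCOn {R : Type*} [CommSemiring R] (w : Finset (Fin m) → R)
    (hVW : Disjoint V W) (hQ : ∀ B ⊆ W, Q B → ∀ x ∈ B, ∀ y ∈ B, ∀ z ∈ V, ¬ (x < z ∧ z < y)) :
    (∑ σ ∈ NCOn V P, ∏ B ∈ σ, w B) * (∑ ρ ∈ NCOn W Q, ∏ B ∈ ρ, w B) =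
      ∑ π ∈ NCOn (V ∪ W) (fun B => B ⊆ V ∧ P B ∨ B ⊆ W ∧ Q B), ∏ B ∈ π, w B := by
  have hVW' {B : Finset (Fin m)} (hB : B.Nonempty) (hBV : B ⊆ V) : ¬ B ⊆ W := fun hBW =>
    hB.ne_empty (disjoint_self_iff_empty B |>.1 (hVW.mono hBV hBW))
  rw [sum_mul_sum, ← sum_product']
  refine sum_nbij' (fun p => p.1 ∪ p.2) (fun π => (π.filter (· ⊆ V), π.filter (· ⊆ W)))
    (fun ⟨σ, ρ⟩ hp => ?_) (fun π hπ => ?_) (fun ⟨σ, ρ⟩ hp => ?_) (fun π hπ => ?_)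
    (fun ⟨σ, ρ⟩ hp => ?_)
  · obtain ⟨⟨hσ, hσnc, hP⟩, hρ, hρnc, hQ'⟩ := by simpa using hp
    refine mem_NCOn.2 ⟨hσ.union hρ hVW, hσnc.union hρnc (fun B hB => (hσ.1 B hB).2)
      (fun B hB => hQ B (hρ.1 B hB).2 (hQ' B hB)), fun B hB => ?_⟩
    rcases mem_union.1 hB with hB | hB
    · exact .inl ⟨(hσ.1 B hB).2, hP B hB⟩
    · exact .inr ⟨(hρ.1 B hB).2, hQ' B hB⟩
  · obtain ⟨hπ, hnc, hPQ⟩ := mem_NCOn.1 hπ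
    have hV : ∀ B ∈ π, ∀ i ∈ B, i ∈ V → B ⊆ V := fun B hB i hiB hiV =>
      (hPQ B hB).elim (·.1) fun h => absurd (h.1 hiB) (disjoint_left.1 hVW hiV)
    have hW : ∀ B ∈ π, ∀ i ∈ B, i ∈ W → B ⊆ W := fun B hB i hiB hiW =>
      (hPQ B hB).elim (fun h => absurd hiW (disjoint_left.1 hVW (h.1 hiB))) (·.1)
    simp only [mem_product, mem_NCOn, mem_filter, and_imp]
    refine ⟨⟨hπ.filter_subset subset_union_left hV, hnc.mono (filter_subset _ _),
      fun B hB hBV => ?_⟩, hπ.filter_subset subset_union_right hW, hnc.mono (filter_subset _ _),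
      fun B hB hBW => ?_⟩
    · exact ((hPQ B hB).resolve_right fun h => hVW' (hπ.1 B hB).1 hBV h.1).2
    · exact ((hPQ B hB).resolve_left fun h => hVW' (hπ.1 B hB).1 h.1 hBW).2
  · obtain ⟨⟨hσ, -, -⟩, hρ, -, -⟩ := by simpa using hp
    simp only [filter_union, Prod.mk.injEq]
    rw [filter_true_of_mem fun B hB => (hσ.1 B hB).2,
      filter_false_of_mem fun B hB hBV => hVW' (hρ.1 B hB).1 hBV (hρ.1 B hB).2,
      filter_false_of_mem fun B hB => hVW' (hσ.1 B hB).1 (hσ.1 B hB).2,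
      filter_true_of_mem fun B hB => (hρ.1 B hB).2, union_empty, empty_union]
    exact ⟨rfl, rfl⟩
  · obtain ⟨-, -, hPQ⟩ := mem_NCOn.1 hπ
    rw [filter_union_right, filter_true_of_mem fun B hB => (hPQ B hB).imp (·.1) (·.1)]
  · obtain ⟨⟨hσ, -, -⟩, hρ, -, -⟩ := by simpa using hp
    exact (prod_union (disjoint_left.2 fun B hBσ hBρ =>
      hVW' (hσ.1 B hBσ).1 (hσ.1 B hBσ).2 (hρ.1 B hBρ).2)).symm

lemma isPartitionOn_map_iff {q : ℕ} (e : Fin q ↪ Fin m) {U : Finset (Fin q)}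
    {σ : Finset (Finset (Fin q))} :
    IsPartitionOn (U.map e) (σ.image (·.map e)) ↔ IsPartitionOn U σ := by
  simp [IsPartitionOn, ExistsUnique]
  grind

lemma isNoncrossing_map_iff {q : ℕ} (e : Fin q ↪o Fin m) {σ : Finset (Finset (Fin q))} :
    IsNoncrossing (σ.image (·.map e.toEmbedding)) ↔ IsNoncrossing σ := by
  simp only [IsNoncrossing, not_iff_not]
  constructor
  · rintro ⟨i, j, k, l, hij, hjk, hkl, B, hB, B', hB', hne, hi, hk, hj, hl⟩
    obtain ⟨b, hb, rfl⟩ := mem_image.1 hB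
    obtain ⟨b', hb', rfl⟩ := mem_image.1 hB'
    obtain ⟨i, -, rfl⟩ := mem_map.1 hi
    obtain ⟨j, -, rfl⟩ := mem_map.1 hj
    obtain ⟨k, -, rfl⟩ := mem_map.1 hk
    obtain ⟨l, -, rfl⟩ := mem_map.1 hl
    simp only [RelEmbedding.coe_toEmbedding, OrderEmbedding.lt_iff_lt] at hij hjk hkl
    exact ⟨i, j, k, l, hij, hjk, hkl, b, hb, b', hb', fun h => hne (h ▸ rfl), (mem_map' _).1 hi,
      (mem_map' _).1 hk, (mem_map' _).1 hj, (mem_map' _).1 hl⟩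
  · rintro ⟨i, j, k, l, hij, hjk, hkl, b, hb, b', hb', hne, hi, hk, hj, hl⟩
    exact ⟨e i, e j, e k, e l, e.lt_iff_lt.2 hij, e.lt_iff_lt.2 hjk, e.lt_iff_lt.2 hkl, _,
      mem_image_of_mem _ hb, _, mem_image_of_mem _ hb', (map_injective _).ne hne,
      (mem_map' e.toEmbedding).2 hi, (mem_map' e.toEmbedding).2 hk,
      (mem_map' e.toEmbedding).2 hj, (mem_map' e.toEmbedding).2 hl⟩

lemma NCOn_map {q : ℕ} (e : Fin q ↪o Fin m) (U : Finset (Fin q)) (P : Finset (Fin m) → Prop) :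
    NCOn (U.map e.toEmbedding) P =
      (NCOn U fun b => P (b.map e.toEmbedding)).image (image (·.map e.toEmbedding)) := by
  ext π
  simp only [mem_image, mem_NCOn]
  constructor
  · rintro ⟨hπ, hnc, hP⟩
    have hrange : ∀ B ∈ π, ∃ b : Finset (Fin q), b.map e.toEmbedding = B := fun B hB =>
      (subset_map_iff.1 (hπ.1 B hB).2).imp fun b hb => hb.2.symm
    choose! pre hpre using hrange
    have hπ' : (π.image pre).image (·.map e.toEmbedding) = π := by
      rw [image_image]; exact (image_congr hpre).trans image_id
    refine ⟨π.image pre, ⟨?_, ?_, ?_⟩, hπ'⟩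
    · rw [← isPartitionOn_map_iff, hπ']; exact hπ
    · rw [← isNoncrossing_map_iff e, hπ']; exact hnc
    · simp only [forall_mem_image]
      exact fun B hB => (hpre B hB).symm ▸ hP B hB
  · rintro ⟨σ, ⟨hσ, hnc, hP⟩, rfl⟩
    exact ⟨isPartitionOn_map_iff _ |>.2 hσ, isNoncrossing_map_iff e |>.2 hnc,
      by simpa only [forall_mem_image] using hP⟩

lemma IsNoncrossing.lt_and_lt_of_mem (hnc : IsNoncrossing π) (hπ : IsPartitionOn U π)
    {B D : Finset (Fin m)} (hB : B ∈ π) (hD : D ∈ π) (hne : B ≠ D) {u v w d : Fin m}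
    (hu : u ∈ B) (hv : v ∈ B) (hw : w ∈ D) (hd : d ∈ D) (huw : u < w) (hwv : w < v) :
    u < d ∧ d < v := by
  have hdu : d ≠ u := fun h => hne (hπ.eq_of_mem hB hD hu (h ▸ hd))
  have hdv : d ≠ v := fun h => hne (hπ.eq_of_mem hB hD hv (h ▸ hd))
  refine ⟨lt_of_not_ge fun h => ?_, lt_of_not_ge fun h => ?_⟩
  · exact hnc ⟨d, u, w, v, lt_of_le_of_ne h hdu, huw, hwv, D, hD, B, hB, hne.symm, hd, hw, hu, hv⟩
  · exact hnc ⟨u, w, v, d, huw, hwv, lt_of_le_of_ne h hdv.symm, B, hB, D, hD, hne, hu, hv, hw, hd⟩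

end Partitions

section Cumulants

variable {A : Type*} [Ring A] [Algebra ℂ A] {m q : ℕ}

lemma cumulantTerm_image_map (R : ∀ m : ℕ, MultilinearMap ℂ (fun _ : Fin m => A) ℂ)
    (e : Fin q ↪o Fin m) (σ : Finset (Finset (Fin q))) (a : Fin m → A) :
    cumulantTerm R (σ.image (·.map e.toEmbedding)) a = cumulantTerm R σ (a ∘ e) := by
  unfold cumulantTerm
  rw [prod_image (map_injective _).injOn]
  refine prod_congr rfl fun b _ => ?_
  have hcard : #b = #(b.map e.toEmbedding) := (card_map _).symm
  have hemb : (b.map e.toEmbedding).orderEmbOfFin rfl = (b.orderEmbOfFin hcard).trans e :=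
    (orderEmbOfFin_unique' _ fun i => by simp).symm
  -- `#(b.map e) = #b` holds only propositionally
  have hcast : ∀ {k} (h : #b = k), R k (fun i => a (e (b.orderEmbOfFin h i))) =
      R #b fun i => a (e (b.orderEmbOfFin rfl i)) := by
    rintro _ rfl; rfl
  simp only [coe_orderIsoOfFin_apply, hemb]
  exact hcast hcard

end Cumulants

section Subwords

variable {M : Type*} [Monoid M] {m p : ℕ}

noncomputable def subwordProd (U : Finset (Fin m)) (a : Fin m → M) : M := (U.sort.map a).prod

lemma subwordProd_univ (a : Fin m → M) : subwordProd univ a = (List.ofFn a).prod := by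
  rw [subwordProd, Fin.sort_univ, List.ofFn_eq_map]

lemma subwordProd_eq_prod_ofFn (U : Finset (Fin m)) (a : Fin m → M) :
    subwordProd U a = (List.ofFn fun i => a (U.orderEmbOfFin rfl i)).prod := by
  rw [subwordProd, ← U.listMap_orderEmbOfFin_finRange rfl, List.map_map, List.ofFn_eq_map]
  rfl

lemma List.prod_map_ite_one {α : Type*} (l : List α) (P : α → Prop) [DecidablePred P]
    (g : α → M) :
    (l.map fun x => if P x then g x else 1).prod = ((l.filter (P ·)).map g).prod := by
  induction l with
  | nil => rfl
  | cons x l ih => by_cases h : P x <;> simp [h, ih]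

lemma prod_ofFn_ite_mem (s : Finset (Fin p)) (g : Fin p → M) :
    (List.ofFn fun t => if t ∈ s then g t else 1).prod = subwordProd s g := by
  rw [List.ofFn_eq_map, List.prod_map_ite_one, subwordProd]
  congr 2
  refine ((List.sortedLT_finRange p).pairwise.filter _).sortedLT |>.eq_of_mem_iff
    s.sortedLT_sort fun t => ?_
  simp

lemma sort_filter_mem_eq_flatMap {f : Fin m → Fin p} (hf : Monotone f) (s : Finset (Fin p)) :
    ({j | f j ∈ s} : Finset (Fin m)).sort =
      s.sort.flatMap fun t => ({j | f j = t} : Finset (Fin m)).sort := by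
  refine (sortedLT_sort _).eq_of_mem_iff ?_ fun j => by simp
  refine List.sortedLT_iff_pairwise.2 (List.pairwise_flatMap.2 ⟨fun t _ => (sortedLT_sort _).pairwise,
    s.sortedLT_sort.pairwise.imp fun {t t'} htt' x hx y hy => ?_⟩)
  simp only [mem_sort, mem_filter, mem_univ, true_and] at hx hy
  exact hf.reflect_lt (hx ▸ hy ▸ htt')

lemma subwordProd_subwordProd_fiber {f : Fin m → Fin p} (hf : Monotone f) (s : Finset (Fin p))
    (a : Fin m → M) :
    subwordProd s (fun t => subwordProd {j | f j = t} a) = subwordProd {j | f j ∈ s} a := by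
  simp only [subwordProd, sort_filter_mem_eq_flatMap hf, List.flatMap, List.map_flatten,
    List.prod_flatten, List.map_map]
  rfl

end Subwords

lemma prod_ofFn_sub_algebraMap {k A : Type*} [CommRing k] [Ring A] [Algebra k A] {p : ℕ}
    (b : Fin p → A) (μ : Fin p → k) :
    (List.ofFn fun t => b t - algebraMap k A (μ t)).prod =
      ∑ s : Finset (Fin p),
        (∏ t ∈ sᶜ, -μ t) • (List.ofFn fun t => if t ∈ s then b t else 1).prod := by
  have hM (v : Fin p → A) : (List.ofFn v).prod = MultilinearMap.mkPiAlgebraFin k p A v :=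
    (MultilinearMap.mkPiAlgebraFin_apply ..).symm
  have hsub : (fun t => b t - algebraMap k A (μ t)) = b + fun t => (-μ t) • 1 := by
    ext t; simp [Algebra.algebraMap_eq_smul_one, sub_eq_add_neg]
  simp only [hM, hsub, MultilinearMap.map_add_univ]
  refine sum_congr rfl fun s _ => ?_
  have hpw : s.piecewise b (fun t => (-μ t) • 1) =
      fun t => (if t ∈ s then 1 else -μ t) • if t ∈ s then b t else 1 := by
    ext t; by_cases ht : t ∈ s <;> simp [ht]
  rw [hpw, MultilinearMap.map_smul_univ]
  congr 1
  simp [prod_ite, filter_notMem_eq_sdiff, compl_eq_univ_sdiff]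

lemma sum_superset_neg_one_pow_card_compl {α R : Type*} [Fintype α] [DecidableEq α] [Ring R]
    {T : Finset α} (hT : T ≠ univ) : ∑ s with T ⊆ s, (-1 : R) ^ #sᶜ = 0 := by
  have hcompl : ∑ s with T ⊆ s, (-1 : R) ^ #sᶜ = ∑ u ∈ Tᶜ.powerset, (-1 : R) ^ #u :=
    sum_nbij' compl compl (by simp) (by simp [subset_compl_comm]) (by simp) (by simp) (by simp)
  rw [hcompl]
  have := Finset.sum_powerset_neg_one_pow_card (x := Tᶜ)
  rw [if_neg (by simpa using hT)] at this
  exact_mod_cast congrArg (Int.cast : ℤ → R) this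

lemma eq_of_sum_neg_one_pow_mul_eq {α R : Type*} [Fintype α] [DecidableEq α] [CommRing R]
    {X Y : Finset α → R} (hXY : ∀ s ≠ univ, X s = Y s)
    (h : ∑ s, (-1) ^ #sᶜ * X s = ∑ s, (-1) ^ #sᶜ * Y s) : X univ = Y univ := by
  rw [← add_sum_erase _ _ (mem_univ univ), ← add_sum_erase _ _ (mem_univ univ),
    sum_congr rfl fun s hs => by rw [hXY s (ne_of_mem_erase hs)]] at h
  simpa using add_right_cancel h

section RunPartitions

variable {m p : ℕ}

def IsMonochromatic {κ : Type*} (c : Fin m → κ) (B : Finset (Fin m)) : Prop :=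
  ∀ j ∈ B, ∀ k ∈ B, c j = c k

variable {f : Fin m → Fin p} {P : Finset (Fin m) → Prop} {B : Finset (Fin m)}

lemma IsMonochromatic.not_lt_and_lt (hB : IsMonochromatic f B) (hf : Monotone f)
    {x y z : Fin m} (hx : x ∈ B) (hy : y ∈ B) (hz : f z ≠ f x) : ¬ (x < z ∧ z < y) :=
  fun ⟨hxz, hzy⟩ => hz (le_antisymm (hB y hy x hx ▸ hf hzy.le) (hf hxz.le))

lemma exists_lt_of_not_isMonochromatic (hB : ¬ IsMonochromatic f B) :
    ∃ j ∈ B, ∃ k ∈ B, f j < f k := by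
  simp only [IsMonochromatic, not_forall] at hB
  obtain ⟨j, hj, k, hk, hne⟩ := hB
  rcases lt_or_gt_of_ne hne with h | h
  exacts [⟨j, hj, k, hk, h⟩, ⟨k, hk, j, hj, h⟩]

variable {R : Type*} [CommSemiring R] (wt : Finset (Fin m) → R)

lemma prod_sum_NCOn_fiber (hf : Monotone f) (hP : ∀ B, IsMonochromatic f B → P B)
    (w : Finset (Fin p)) :
    ∏ t ∈ w, ∑ ρ ∈ NCOn {j | f j = t} P, ∏ B ∈ ρ, wt B =
      ∑ ρ ∈ NCOn {j | f j ∈ w} (IsMonochromatic f), ∏ B ∈ ρ, wt B := by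
  induction w using Finset.induction_on with
  | empty => simp [NCOn_empty]
  | insert t w ht ih =>
    have hdisj : Disjoint ({j | f j = t} : Finset (Fin m)) ({j | f j ∈ w} : Finset (Fin m)) :=
      disjoint_filter.2 fun j _ hj hjw => ht (hj ▸ hjw)
    have hsep : ∀ B ⊆ ({j | f j ∈ w} : Finset (Fin m)), IsMonochromatic f B →
        ∀ x ∈ B, ∀ y ∈ B, ∀ z ∈ ({j | f j = t} : Finset (Fin m)), ¬ (x < z ∧ z < y) :=
      fun B hBw hB x hx y hy z hz => hB.not_lt_and_lt hf hx hy fun h =>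
        ht ((mem_filter.1 hz).2 ▸ h ▸ (mem_filter.1 (hBw hx)).2)
    rw [prod_insert ht, ih, sum_NCOn_mul_sum_NCOn wt hdisj hsep, ← filter_or]
    simp only [← mem_insert]
    rw [NCOn_congr]
    intro B hBU ⟨x, hx⟩
    refine ⟨?_, fun hB => ?_⟩
    · rintro (⟨hBt, -⟩ | ⟨-, hB⟩)
      · intro j hj k hk
        rw [(mem_filter.1 (hBt hj)).2, (mem_filter.1 (hBt hk)).2]
      · exact hB
    · have hfB : ∀ j ∈ B, f j = f x := fun j hj => hB j hj x hx
      by_cases hxt : f x = t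
      · exact .inl ⟨fun j hj => mem_filter.2 ⟨mem_univ j, (hfB j hj).trans hxt⟩, hP B hB⟩
      · have hxw : f x ∈ w := (mem_insert.1 (mem_filter.1 (hBU hx)).2).resolve_left hxt
        exact .inr ⟨fun j hj => mem_filter.2 ⟨mem_univ j, hfB j hj ▸ hxw⟩, hB⟩

lemma sum_NCOn_mul_sum_NCOn_compl (hf : Monotone f) (hP : ∀ B, IsMonochromatic f B → P B)
    (s : Finset (Fin p)) :
    (∑ σ ∈ NCOn {j | f j ∈ s} P, ∏ B ∈ σ, wt B) *
        (∑ ρ ∈ NCOn {j | f j ∈ sᶜ} (IsMonochromatic f), ∏ B ∈ ρ, wt B) =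
      ∑ π ∈ NCOn univ P with ∀ B ∈ π, ¬ IsMonochromatic f B → ∀ j ∈ B, f j ∈ s,
        ∏ B ∈ π, wt B := by
  have hdisj : Disjoint ({j | f j ∈ s} : Finset (Fin m)) ({j | f j ∈ sᶜ} : Finset (Fin m)) :=
    disjoint_filter.2 fun j _ hj hjc => mem_compl.1 hjc hj
  have hsep : ∀ B ⊆ ({j | f j ∈ sᶜ} : Finset (Fin m)), IsMonochromatic f B →
      ∀ x ∈ B, ∀ y ∈ B, ∀ z ∈ ({j | f j ∈ s} : Finset (Fin m)), ¬ (x < z ∧ z < y) :=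
    fun B hBc hB x hx y hy z hz => hB.not_lt_and_lt hf hx hy fun h =>
      mem_compl.1 (mem_filter.1 (hBc hx)).2 (h ▸ (mem_filter.1 hz).2)
  rw [sum_NCOn_mul_sum_NCOn wt hdisj hsep, ← filter_or,
    filter_true_of_mem fun j _ => (em (f j ∈ s)).imp_right mem_compl.2,
    ← NCOn_and, NCOn_congr]
  intro B _ ⟨x, hx⟩
  refine ⟨?_, fun ⟨hPB, hs⟩ => ?_⟩
  · rintro (⟨hBs, hPB⟩ | ⟨-, hB⟩)
    · exact ⟨hPB, fun _ j hj => (mem_filter.1 (hBs hj)).2⟩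
    · exact ⟨hP B hB, fun h => absurd hB h⟩
  · by_cases hB : IsMonochromatic f B
    · have hfB : ∀ j ∈ B, f j = f x := fun j hj => hB j hj x hx
      by_cases hxs : f x ∈ s
      · exact .inl ⟨fun j hj => mem_filter.2 ⟨mem_univ j, hfB j hj ▸ hxs⟩, hPB⟩
      · exact .inr ⟨fun j hj => mem_filter.2 ⟨mem_univ j, mem_compl.2 (hfB j hj ▸ hxs)⟩, hB⟩
    · exact .inl ⟨fun j hj => mem_filter.2 ⟨mem_univ j, hs hB j hj⟩, hPB⟩

end RunPartitions

section SpanningBlocks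

variable {ι : Type*} {m p : ℕ} {idx : Fin m → ι} {f : Fin m → Fin p}

lemma IsRunDecomposition.exists_run_avoided (hf : IsRunDecomposition idx f) (hm : 0 < m)
    {π : Finset (Finset (Fin m))} (hπ : IsPartitionOn univ π) (hnc : IsNoncrossing π)
    (hmono : ∀ B ∈ π, IsMonochromatic idx B) :
    ∃ t, ∀ B ∈ π, ¬ IsMonochromatic f B → ∀ j ∈ B, f j ≠ t := by
  set S : Finset (Fin m × Fin m) := {uv | f uv.1 < f uv.2 ∧ ∃ B ∈ π, uv.1 ∈ B ∧ uv.2 ∈ B}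
  have hmemS {u v : Fin m} {B} (hB : B ∈ π) (hu : u ∈ B) (hv : v ∈ B) (huv : f u < f v) :
      (u, v) ∈ S := mem_filter.2 ⟨mem_univ _, huv, B, hB, hu, hv⟩
  by_cases hS : S.Nonempty
  swap
  · refine ⟨f ⟨0, hm⟩, fun B hB hBf => ?_⟩
    obtain ⟨j, hj, k, hk, hjk⟩ := exists_lt_of_not_isMonochromatic hBf
    exact absurd ⟨_, hmemS hB hj hk hjk⟩ hS
  obtain ⟨⟨u, v⟩, huv, hmin⟩ := S.exists_min_image (fun uv => uv.2.val - uv.1.val) hS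
  obtain ⟨hfuv, B₀, hB₀, hu, hv⟩ := (mem_filter.1 huv).2
  have huv' : u < v := hf.monotone.reflect_lt hfuv
  obtain ⟨x, hux, hxv, hx⟩ : ∃ x, u ≤ x ∧ x ≤ v ∧ idx x ≠ idx u := by
    by_contra! h
    exact hfuv.ne (hf.eq_of_forall huv'.le h)
  refine ⟨f x, fun D hD hDf w hw hwx => ?_⟩
  have hidx : idx w = idx x := hf.idx_eq hwx
  have hne : B₀ ≠ D := by
    rintro rfl
    exact hx (hidx ▸ hmono B₀ hB₀ w hw u hu)
  have huw : u < w := lt_of_not_ge fun h =>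
    hx (hidx.symm.trans (hf.idx_eq (hf.eq_of_le_of_le h hux hwx)).symm)
  have hwv : w < v := lt_of_not_ge fun h =>
    hx ((hf.idx_eq (hf.eq_of_le_of_le hxv h hwx.symm)).symm.trans (hmono B₀ hB₀ v hv u hu))
  obtain ⟨j, hj, k, hk, hjk⟩ := exists_lt_of_not_isMonochromatic hDf
  have hj' := hnc.lt_and_lt_of_mem hπ hB₀ hD hne hu hv hw hj huw hwv
  have hk' := hnc.lt_and_lt_of_mem hπ hB₀ hD hne hu hv hw hk huw hwv
  have hjk' : v.val - u.val ≤ k.val - j.val := hmin _ (hmemS hD hj hk hjk)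
  simp only [Fin.lt_def] at hj' hk'
  omega

lemma IsRunDecomposition.sum_neg_one_pow_mul_sum_filter_eq_zero (hf : IsRunDecomposition idx f)
    (hm : 0 < m)
    {R : Type*} [CommRing R] (g : Finset (Finset (Fin m)) → R) :
    ∑ s : Finset (Fin p), (-1) ^ #sᶜ * ∑ π ∈ NCOn univ (IsMonochromatic idx) with
      ∀ B ∈ π, ¬ IsMonochromatic f B → ∀ j ∈ B, f j ∈ s, g π = 0 := by
  simp_rw [sum_filter, mul_sum]
  rw [sum_comm]
  refine sum_eq_zero fun π hπ => ?_
  obtain ⟨hπ, hnc, hmono⟩ := mem_NCOn.1 hπ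
  obtain ⟨t, ht⟩ := hf.exists_run_avoided hm hπ hnc hmono
  set T := {B ∈ π | ¬ IsMonochromatic f B}.biUnion (image f)
  have hT (s : Finset (Fin p)) :
      (∀ B ∈ π, ¬ IsMonochromatic f B → ∀ j ∈ B, f j ∈ s) ↔ T ⊆ s := by
    simp [T, image_subset_iff]
  have hTuniv : T ≠ univ := fun h => by
    have htT : t ∈ T := h ▸ mem_univ t
    simp only [T, mem_biUnion, mem_filter, mem_image] at htT
    obtain ⟨B, ⟨hB, hBf⟩, j, hj, hjt⟩ := htT
    exact ht B hB hBf j hj hjt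
  simp_rw [hT, mul_ite, mul_zero, ← sum_filter, ← sum_mul,
    sum_superset_neg_one_pow_card_compl hTuniv, zero_mul]

end SpanningBlocks

section FreeCumulants

variable {A : Type*} [Ring A] [Algebra ℂ A] {ι : Type*} {τ : A →ₗ[ℂ] ℂ}
  {R : ∀ m : ℕ, MultilinearMap ℂ (fun _ : Fin m => A) ℂ} {Alg : ι → Subalgebra ℂ A}
  {m : ℕ} {idx : Fin m → ι} {a : Fin m → A}

lemma IsFreeFamily.sum_prod_neg_mul_tau_subwordProd_eq_zero (hfree : IsFreeFamily τ Alg)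
    (hτ1 : τ 1 = 1) (ha : ∀ j, a j ∈ Alg (idx j)) {k : ℕ} {f : Fin m → Fin (k + 1)}
    (hf : IsRunDecomposition idx f) :
    ∑ s : Finset (Fin (k + 1)), (∏ t ∈ sᶜ, -τ (subwordProd {j | f j = t} a)) *
      τ (subwordProd {j | f j ∈ s} a) = 0 := by
  set b : Fin (k + 1) → A := fun t => subwordProd {j | f j = t} a
  have hb (t) : b t ∈ Alg (hf.colour t) := list_prod_mem fun x hx => by
    obtain ⟨j, hj, rfl⟩ := List.mem_map.1 hx
    have hjt : f j = t := (mem_filter.1 ((mem_sort _).1 hj)).2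
    exact hjt ▸ hf.idx_eq_colour j ▸ ha j
  have hcentred := hfree k hf.colour (fun t => b t - algebraMap ℂ A (τ (b t)))
    (fun t => sub_mem (hb t) (Subalgebra.algebraMap_mem _ _)) hf.colour_castSucc_ne_succ
    (fun t => by simp [Algebra.algebraMap_eq_smul_one, hτ1])
  rw [prod_ofFn_sub_algebraMap, map_sum] at hcentred
  simpa only [map_smul, smul_eq_mul, prod_ofFn_ite_mem, b,
    subwordProd_subwordProd_fiber hf.monotone] using hcentred

lemma tau_subwordProd_eq_sum_NCOn
    (ih : ∀ q < m, ∀ (idx' : Fin q → ι) (a' : Fin q → A), (∀ j, a' j ∈ Alg (idx' j)) →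
      τ (List.ofFn a').prod = ∑ π ∈ NCOn univ (IsMonochromatic idx'), cumulantTerm R π a')
    (ha : ∀ j, a j ∈ Alg (idx j)) {U : Finset (Fin m)} (hU : U ≠ univ) :
    τ (subwordProd U a) = ∑ π ∈ NCOn U (IsMonochromatic idx), cumulantTerm R π a := by
  have hcard : #U < m := by simpa using card_lt_card (ssubset_univ_iff.2 hU)
  rw [subwordProd_eq_prod_ofFn,
    ih #U hcard (fun i => idx (U.orderEmbOfFin rfl i)) _ fun i => ha _]
  conv_rhs => rw [← map_orderEmbOfFin_univ U rfl, NCOn_map,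
    sum_image fun σ _ σ' _ h => image_injective (map_injective _) h]
  refine sum_congr ?_ fun σ _ => (cumulantTerm_image_map R _ σ a).symm
  congr 1
  ext b
  simp [IsMonochromatic]

lemma tau_subwordProd_mul_prod_tau_fiber
    (hsub : ∀ U : Finset (Fin m), U ≠ univ →
      τ (subwordProd U a) = ∑ π ∈ NCOn U (IsMonochromatic idx), cumulantTerm R π a)
    {p : ℕ} {f : Fin m → Fin p} (hf : IsRunDecomposition idx f)
    (hfib : ∀ t, ({j | f j = t} : Finset (Fin m)) ≠ univ)
    {s : Finset (Fin p)} (hs : s ≠ univ) :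
    τ (subwordProd {j | f j ∈ s} a) * ∏ t ∈ sᶜ, τ (subwordProd {j | f j = t} a) =
      ∑ π ∈ NCOn univ (IsMonochromatic idx) with
        ∀ B ∈ π, ¬ IsMonochromatic f B → ∀ j ∈ B, f j ∈ s, cumulantTerm R π a := by
  have hP (B : Finset (Fin m)) (hB : IsMonochromatic f B) : IsMonochromatic idx B :=
    fun j hj k hk => hf.idx_eq (hB j hj k hk)
  have hV : ({j | f j ∈ s} : Finset (Fin m)) ≠ univ := by
    obtain ⟨t, ht⟩ : ∃ t, t ∉ s := by simpa [eq_univ_iff_forall] using hs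
    obtain ⟨j, rfl⟩ := hf.surjective t
    simpa [eq_univ_iff_forall] using ⟨j, ht⟩
  rw [hsub _ hV, prod_congr rfl fun t _ => hsub _ (hfib t)]
  unfold cumulantTerm
  rw [prod_sum_NCOn_fiber _ hf.monotone hP, sum_NCOn_mul_sum_NCOn_compl _ hf.monotone hP]

lemma tau_eq_sum_NCOn_of_forall_lt (hτ1 : τ 1 = 1) (hR : MomentCumulant τ R)
    (hfree : IsFreeFamily τ Alg) (ha : ∀ j, a j ∈ Alg (idx j))
    (ih : ∀ q < m, ∀ (idx' : Fin q → ι) (a' : Fin q → A), (∀ j, a' j ∈ Alg (idx' j)) →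
      τ (List.ofFn a').prod = ∑ π ∈ NCOn univ (IsMonochromatic idx'), cumulantTerm R π a') :
    τ (List.ofFn a).prod = ∑ π ∈ NCOn univ (IsMonochromatic idx), cumulantTerm R π a := by
  rcases Nat.eq_zero_or_pos m with rfl | hm
  · simp [univ_eq_empty, NCOn_empty, cumulantTerm, hτ1]
  by_cases hconst : ∀ j k, idx j = idx k
  · rw [← NC_filter_eq_NCOn, filter_true_of_mem fun π _ B _ j _ k _ => hconst j k]
    exact hR m hm a
  obtain ⟨k, f, hf⟩ := exists_isRunDecomposition idx hm
  have hfib (t) : ({j | f j = t} : Finset (Fin m)) ≠ univ := fun h => hconst fun j j' => by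
    have hj : ∀ j, f j = t := by simpa [eq_univ_iff_forall] using h
    exact hf.idx_eq ((hj j).trans (hj j').symm)
  have key := eq_of_sum_neg_one_pow_mul_eq
    (fun s hs => tau_subwordProd_mul_prod_tau_fiber (fun U hU => tau_subwordProd_eq_sum_NCOn ih ha hU)
      hf hfib hs) ?_
  · simpa [subwordProd_univ] using key
  rw [hf.sum_neg_one_pow_mul_sum_filter_eq_zero hm,
    ← hfree.sum_prod_neg_mul_tau_subwordProd_eq_zero hτ1 ha hf]
  refine sum_congr rfl fun s _ => ?_
  rw [prod_neg]
  ring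

end FreeCumulants

theorem tau_eq_sum_monochromatic_general {A : Type*} [Ring A] [Algebra ℂ A] {ι : Type*}
    (τ : A →ₗ[ℂ] ℂ) (hτ1 : τ 1 = 1)
    (R : ∀ m : ℕ, MultilinearMap ℂ (fun _ : Fin m => A) ℂ)
    (hR : MomentCumulant τ R)
    (Alg : ι → Subalgebra ℂ A) (hfree : IsFreeFamily τ Alg)
    (n : ℕ) (idx : Fin n → ι) (a : Fin n → A)
    (ha : ∀ j, a j ∈ Alg (idx j)) :
    τ (List.ofFn a).prod =
      ∑ π ∈ (NC n).filter (fun π => ∀ B ∈ π, ∀ j ∈ B, ∀ k ∈ B, idx j = idx k),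
        cumulantTerm R π a := by
  rw [NC_filter_eq_NCOn fun B => ∀ j ∈ B, ∀ k ∈ B, idx j = idx k]
  induction n using Nat.strong_induction_on with
  | _ n ih =>
    exact tau_eq_sum_NCOn_of_forall_lt hτ1 hR hfree ha fun q hq _ _ => ih q hq _ _

/-- For a free family of unital subalgebras, `τ(a₁ ⋯ a_n)` is the sum of the cumulant
terms `Π_{V ∈ π} R^{(|V|)}(a_V)` over only those noncrossing partitions `π` all of whose
blocks are monochromatic (the index map `j ↦ i_j` is constant on every block). -/
theorem tau_eq_sum_monochromatic {A : Type*} [Ring A] [Algebra ℂ A] {ι : Type*}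
    (τ : A →ₗ[ℂ] ℂ) (hτ1 : τ 1 = 1)
    (R : ∀ m : ℕ, MultilinearMap ℂ (fun _ : Fin m => A) ℂ)
    (hR : MomentCumulant τ R)
    (Alg : ι → Subalgebra ℂ A) (hfree : IsFreeFamily τ Alg)
    (n : ℕ) (hn : 0 < n) (idx : Fin n → ι) (a : Fin n → A)
    (ha : ∀ j, a j ∈ Alg (idx j)) :
    τ (List.ofFn a).prod =
      ∑ π ∈ (NC n).filter (fun π => ∀ B ∈ π, ∀ j ∈ B, ∀ k ∈ B, idx j = idx k),
        cumulantTerm R π a :=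
  tau_eq_sum_monochromatic_general τ hτ1 R hR Alg hfree n idx a ha
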